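/- arXiv:1606.04610 — 3 statements merged into one kernel-verified Lean document; each statement's English description precedes it below -/
import Mathlib

section
/- For every measurable α:[0,1]→[0,1], the integral γ := ∫₀^∞ (1/(1+t) − t/(1+t²)) · α(1/(1+t)) dt is absolutely convergent, and for every λ>0 one has log φ^{(α)}(λ) = γ + ∫₀^∞ (t/(1+t²) − 1/(λ+t)) · α(1/(1+t)) dt. -/
/-!
The substitution `x = 1 / (1 + t)` maps `(0, ∞)` onto `(0, 1)` and turns
`(λ - 1) / (1 + (λ - 1) x) dx` into `(1 / (1 + t) - 1 / (λ + t)) dt`. Splitting this kernel as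
`(1 / (1 + t) - t / (1 + t²)) + (t / (1 + t²) - 1 / (λ + t))` gives two pieces that are both
`O(1 / (1 + t²))` on `(0, ∞)`, so against the bounded `α (1 / (1 + t))` each is integrable and
the integral splits accordingly.
-/

open MeasureTheory Real Set

lemma image_one_div_one_add_Ioi : (fun t : ℝ => 1 / (1 + t)) '' Ioi 0 = Ioo 0 1 := by
  ext x
  simp only [mem_image, mem_Ioi, mem_Ioo]
  constructor
  · rintro ⟨t, ht, rfl⟩
    exact ⟨by positivity, (div_lt_one (by linarith)).2 (by linarith)⟩
  · rintro ⟨hx0, hx1⟩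
    refine ⟨1 / x - 1, by linarith [one_lt_one_div hx0 hx1], ?_⟩
    simp

theorem integral_Ioo_zero_one_eq_integral_Ioi {E : Type*} [NormedAddCommGroup E]
    [NormedSpace ℝ E] (g : ℝ → E) :
    ∫ x in Ioo 0 1, g x = ∫ t in Ioi 0, ((1 + t) ^ 2)⁻¹ • g (1 / (1 + t)) := by
  have hderiv : ∀ t ∈ Ioi (0 : ℝ),
      HasDerivWithinAt (fun t : ℝ => 1 / (1 + t)) (-((1 + t) ^ 2)⁻¹) (Ioi 0) t := by
    intro t ht
    have hne : 1 + t ≠ 0 := by linarith [mem_Ioi.1 ht]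
    simp only [one_div]
    exact (((hasDerivAt_id t).const_add 1).inv hne).hasDerivWithinAt.congr_deriv
      (by simp [div_eq_mul_inv])
  have hinj : InjOn (fun t : ℝ => 1 / (1 + t)) (Ioi 0) := fun s _ t _ h => by
    simpa using h
  rw [← image_one_div_one_add_Ioi,
    integral_image_eq_integral_abs_deriv_smul measurableSet_Ioi hderiv hinj]
  refine setIntegral_congr_fun measurableSet_Ioi fun t _ => ?_
  rw [abs_neg, abs_inv, abs_sq]

lemma inv_one_add_sq_mul_div_one_add_mul_one_div {l t : ℝ} (hl : 0 < l) (ht : 0 ≤ t) :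
    ((1 + t) ^ 2)⁻¹ * ((l - 1) / (1 + (l - 1) * (1 / (1 + t)))) =
      1 / (1 + t) - 1 / (l + t) := by
  have : 0 < l + t := by linarith
  have hden : 1 + (l - 1) * (1 / (1 + t)) = (l + t) / (1 + t) := by
    field_simp
    ring
  rw [hden]
  field_simp
  ring

theorem intervalIntegral_div_one_add_mul_eq_integral_Ioi (α : ℝ → ℝ) {l : ℝ} (hl : 0 < l) :
    ∫ x in (0 : ℝ)..1, (l - 1) / (1 + (l - 1) * x) * α x =
      ∫ t in Ioi 0, (1 / (1 + t) - 1 / (l + t)) * α (1 / (1 + t)) := by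
  rw [intervalIntegral.integral_of_le zero_le_one, integral_Ioc_eq_integral_Ioo,
    integral_Ioo_zero_one_eq_integral_Ioi]
  refine setIntegral_congr_fun measurableSet_Ioi fun t ht => ?_
  rw [smul_eq_mul, ← mul_assoc, inv_one_add_sq_mul_div_one_add_mul_one_div hl (le_of_lt ht)]

lemma abs_one_div_one_add_sub_div_one_add_sq_le {t : ℝ} (ht : 0 ≤ t) :
    |1 / (1 + t) - t / (1 + t ^ 2)| ≤ (1 + t ^ 2)⁻¹ := by
  calc |1 / (1 + t) - t / (1 + t ^ 2)| = |1 - t| / ((1 + t) * (1 + t ^ 2)) := by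
        rw [← abs_of_pos (by positivity : 0 < (1 + t) * (1 + t ^ 2)), ← abs_div]
        congr 1
        field_simp
        ring
    _ ≤ (1 + t) / ((1 + t) * (1 + t ^ 2)) := by
        gcongr
        exact abs_le.2 ⟨by linarith, by linarith⟩
    _ = (1 + t ^ 2)⁻¹ := by field_simp

lemma abs_div_one_add_sq_sub_one_div_add_le {l t : ℝ} (hl : 0 < l) (ht : 0 ≤ t) :
    |t / (1 + t ^ 2) - 1 / (l + t)| ≤ (l + l⁻¹) * (1 + t ^ 2)⁻¹ := by
  have hlt : 0 < l + t := by linarith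
  have hnum : |l * t - 1| ≤ (l + l⁻¹) * (l + t) := by
    have : 0 ≤ l⁻¹ * t := by positivity
    rw [abs_le]
    constructor <;> nlinarith [mul_inv_cancel₀ hl.ne']
  calc |t / (1 + t ^ 2) - 1 / (l + t)| = |l * t - 1| / ((1 + t ^ 2) * (l + t)) := by
        rw [← abs_of_pos (by positivity : 0 < (1 + t ^ 2) * (l + t)), ← abs_div]
        congr 1
        field_simp
        ring
    _ ≤ (l + l⁻¹) * (l + t) / ((1 + t ^ 2) * (l + t)) := by gcongr
    _ = (l + l⁻¹) * (1 + t ^ 2)⁻¹ := by field_simp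

lemma integrableOn_of_abs_le_mul_inv_one_add_sq {c : ℝ → ℝ} {s : Set ℝ} (hc : Measurable c)
    (hs : MeasurableSet s) {C : ℝ} (hbound : ∀ t ∈ s, |c t| ≤ C * (1 + t ^ 2)⁻¹) :
    IntegrableOn c s :=
  (integrable_inv_one_add_sq.const_mul C).integrableOn.mono' hc.aestronglyMeasurable
    (ae_restrict_of_forall_mem hs hbound)

lemma norm_comp_one_div_one_add_le_one {α : ℝ → ℝ}
    (hrange : ∀ x ∈ Icc (0 : ℝ) 1, α x ∈ Icc (0 : ℝ) 1) {t : ℝ} (ht : 0 ≤ t) :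
    ‖α (1 / (1 + t))‖ ≤ 1 := by
  have hx : 1 / (1 + t) ∈ Icc (0 : ℝ) 1 :=
    ⟨by positivity, (div_le_one (by linarith)).2 (by linarith)⟩
  obtain ⟨h0, h1⟩ := hrange _ hx
  rwa [Real.norm_eq_abs, abs_of_nonneg h0]

theorem stmt7 (α : ℝ → ℝ) (hα : Measurable α)
    (hrange : ∀ x ∈ Set.Icc (0:ℝ) 1, α x ∈ Set.Icc (0:ℝ) 1) :
    IntegrableOn (fun t => (1 / (1 + t) - t / (1 + t ^ 2)) * α (1 / (1 + t)))
      (Set.Ioi 0) volume ∧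
    ∀ l : ℝ, 0 < l →
      Real.log (Real.exp (∫ x in (0:ℝ)..1, (l - 1) / (1 + (l - 1) * x) * α x)) =
        (∫ t in Set.Ioi (0:ℝ), (1 / (1 + t) - t / (1 + t ^ 2)) * α (1 / (1 + t))) +
          ∫ t in Set.Ioi (0:ℝ), (t / (1 + t ^ 2) - 1 / (l + t)) * α (1 / (1 + t)) := by
  have hαm : AEStronglyMeasurable (fun t => α (1 / (1 + t))) (volume.restrict (Ioi 0)) :=
    (hα.comp (by fun_prop)).aestronglyMeasurable
  have hαb : ∀ᵐ t ∂(volume.restrict (Ioi (0 : ℝ))), ‖α (1 / (1 + t))‖ ≤ 1 :=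
    ae_restrict_of_forall_mem measurableSet_Ioi fun t ht =>
      norm_comp_one_div_one_add_le_one hrange (le_of_lt ht)
  have hA : IntegrableOn (fun t => (1 / (1 + t) - t / (1 + t ^ 2)) * α (1 / (1 + t)))
      (Ioi 0) := by
    refine Integrable.mul_bdd ?_ hαm hαb
    exact integrableOn_of_abs_le_mul_inv_one_add_sq (by fun_prop) measurableSet_Ioi
      fun t ht => (abs_one_div_one_add_sub_div_one_add_sq_le (le_of_lt ht)).trans_eq
        (one_mul _).symm
  refine ⟨hA, fun l hl => ?_⟩
  have hB : IntegrableOn (fun t => (t / (1 + t ^ 2) - 1 / (l + t)) * α (1 / (1 + t)))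
      (Ioi 0) := by
    refine Integrable.mul_bdd ?_ hαm hαb
    exact integrableOn_of_abs_le_mul_inv_one_add_sq (by fun_prop) measurableSet_Ioi
      fun t ht => abs_div_one_add_sq_sub_one_div_add_le hl (le_of_lt ht)
  rw [log_exp, intervalIntegral_div_one_add_mul_eq_integral_Ioi α hl, ← integral_add hA hB]
  exact setIntegral_congr_fun measurableSet_Ioi fun t _ => by ring
end

section
/- Let z ∈ ℂ with Im z > 0, let 0 = t₀ < t₁ < ⋯ < tₙ = 1, and set z₀ := 1 and zᵢ := z − 1 + 1/tᵢ for 1 ≤ i ≤ n. Then arg(zᵢ/zᵢ₋₁) > 0 for every i ∈ {1,…,n} and Σᵢ₌₁ⁿ arg(zᵢ/zᵢ₋₁) = arg z ∈ (0, π). -/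
open Complex

lemma arg_im_pos {w : ℂ} (h : 0 < w.im) : 0 < w.arg ∧ w.arg < Real.pi := by
  constructor
  · rcases lt_or_eq_of_le (Complex.arg_nonneg_iff.2 h.le) with h' | h'
    · exact h'
    · exact absurd (Complex.arg_eq_zero_iff.1 h'.symm).2 (by linarith)
  · rcases lt_or_eq_of_le (Complex.arg_le_pi w) with h' | h'
    · exact h'
    · exact absurd (Complex.arg_eq_pi_iff.1 h').2 (by linarith)

lemma arg_div_sub {a b : ℂ} (ha : a ≠ 0) (hb : b ≠ 0)
    (h1 : -Real.pi < a.arg - b.arg) (h2 : a.arg - b.arg ≤ Real.pi) :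
    (a / b).arg = a.arg - b.arg := by
  have h := Complex.arg_div_coe_angle ha hb
  have h3 : ((a / b).arg : Real.Angle) = ((a.arg - b.arg : ℝ) : Real.Angle) := by
    rw [h, Real.Angle.coe_sub]
  have h4 := congrArg Real.Angle.toReal h3
  rwa [Real.Angle.toReal_coe_eq_self_iff.2 ⟨Complex.neg_pi_lt_arg _, Complex.arg_le_pi _⟩,
    Real.Angle.toReal_coe_eq_self_iff.2 ⟨h1, h2⟩] at h4

theorem stmt11 (z : ℂ) (hz : 0 < z.im) (n : ℕ) (hn : 0 < n) (t : ℕ → ℝ)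
    (ht0 : t 0 = 0) (htn : t n = 1) (hmono : ∀ i < n, t i < t (i + 1))
    (zf : ℕ → ℂ) (hzf0 : zf 0 = 1)
    (hzf : ∀ i, 1 ≤ i → i ≤ n → zf i = z - 1 + 1 / (t i : ℂ)) :
    (∀ i, 1 ≤ i → i ≤ n → 0 < Complex.arg (zf i / zf (i - 1))) ∧
    (∑ i ∈ Finset.range n, Complex.arg (zf (i + 1) / zf i)) = Complex.arg z ∧
    Complex.arg z ∈ Set.Ioo 0 Real.pi := by
  -- positivity of t i for 1 ≤ i ≤ n
  have htpos : ∀ i, 1 ≤ i → i ≤ n → 0 < t i := by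
    intro i h1 h2
    have : ∀ j, j ≤ n → 1 ≤ j → 0 < t j := by
      intro j
      induction j with
      | zero => omega
      | succ k ih =>
        intro hjn _
        have hk := hmono k (by omega)
        rcases Nat.eq_zero_or_pos k with hk0 | hk0
        · subst hk0; rw [ht0] at hk; linarith
        · have := ih (by omega) hk0; linarith
    exact this i h2 h1
  -- imaginary parts
  have hIm : ∀ i, 1 ≤ i → i ≤ n → (zf i).im = z.im := by
    intro i h1 h2
    rw [hzf i h1 h2]
    have : (1 / (t i : ℂ)) = ((1 / t i : ℝ) : ℂ) := by push_cast; ring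
    rw [this]
    simp
  have hne : ∀ i, i ≤ n → zf i ≠ 0 := by
    intro i h2
    rcases Nat.eq_zero_or_pos i with h | h
    · subst h; rw [hzf0]; exact one_ne_zero
    · intro hc
      have := hIm i h h2
      rw [hc] at this
      simp at this; linarith
  -- arg zf i ∈ (0, π) for 1 ≤ i ≤ n, arg zf 0 = 0
  have harg : ∀ i, 1 ≤ i → i ≤ n → 0 < (zf i).arg ∧ (zf i).arg < Real.pi := by
    intro i h1 h2
    exact arg_im_pos (by rw [hIm i h1 h2]; exact hz)
  have harg0 : (zf 0).arg = 0 := by rw [hzf0]; simp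
  -- each ratio has positive imaginary part
  have hratio : ∀ i, 1 ≤ i → i ≤ n → 0 < (zf i / zf (i - 1)).im := by
    intro i h1 h2
    rcases Nat.eq_or_lt_of_le h1 with h | h
    · subst h
      simp only [Nat.sub_self, hzf0, div_one]
      rw [hIm 1 le_rfl h2]; exact hz
    · -- i ≥ 2
      have hi1 : 1 ≤ i - 1 := by omega
      have hi2 : i - 1 ≤ n := by omega
      rw [Complex.div_im]
      have him1 := hIm i h1 h2
      have him2 := hIm (i - 1) hi1 hi2
      have hre : (zf i).re < (zf (i - 1)).re := by
        rw [hzf i h1 h2, hzf (i - 1) hi1 hi2]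
        have e1 : (1 / (t i : ℂ)) = ((1 / t i : ℝ) : ℂ) := by push_cast; ring
        have e2 : (1 / (t (i - 1) : ℂ)) = ((1 / t (i - 1) : ℝ) : ℂ) := by push_cast; ring
        rw [e1, e2]
        simp only [add_re, sub_re, one_re, ofReal_re]
        have ht1 := htpos (i - 1) hi1 hi2
        have ht2 := htpos i h1 h2
        have htlt : t (i - 1) < t i := by
          have := hmono (i - 1) (by omega)
          have : t (i - 1) < t (i - 1 + 1) := this
          rwa [Nat.sub_add_cancel h1] at this
        have : 1 / t i < 1 / t (i - 1) := by
          apply one_div_lt_one_div_of_lt ht1 htlt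
        linarith
      have hnsq : 0 < Complex.normSq (zf (i - 1)) :=
        Complex.normSq_pos.2 (hne (i - 1) hi2)
      rw [him1, him2]
      rw [div_sub_div_same, lt_div_iff₀ hnsq]
      nlinarith
  -- each ratio arg equals difference of args
  have hdiff : ∀ i, 1 ≤ i → i ≤ n →
      (zf i / zf (i - 1)).arg = (zf i).arg - (zf (i - 1)).arg := by
    intro i h1 h2
    have hb := hne (i - 1) (by omega)
    have ha := hne i h2
    apply arg_div_sub ha hb
    · have h3 := (harg i h1 h2).1
      have h4 : (zf (i - 1)).arg < Real.pi := by
        rcases Nat.eq_zero_or_pos (i - 1) with h | h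
        · rw [h, harg0]; exact Real.pi_pos
        · exact (harg (i - 1) h (by omega)).2
      linarith
    · have h3 := (harg i h1 h2).2
      have h4 : 0 ≤ (zf (i - 1)).arg := by
        rcases Nat.eq_zero_or_pos (i - 1) with h | h
        · rw [h, harg0]
        · exact (harg (i - 1) h (by omega)).1.le
      linarith
  have hzfn : zf n = z := by
    rw [hzf n hn le_rfl, htn]; push_cast; ring
  refine ⟨?_, ?_, ?_⟩
  · intro i h1 h2
    exact (arg_im_pos (hratio i h1 h2)).1
  · have : ∀ i ∈ Finset.range n, (zf (i + 1) / zf i).arg = (zf (i + 1)).arg - (zf i).arg := by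
      intro i hi
      rw [Finset.mem_range] at hi
      have := hdiff (i + 1) (by omega) (by omega)
      simpa using this
    rw [Finset.sum_congr rfl this, Finset.sum_range_sub (fun i => (zf i).arg), harg0, hzfn,
      sub_zero]
  · have := arg_im_pos hz
    exact ⟨this.1, this.2⟩
end

section
/- Let z ∈ ℂ with Im z > 0, let 0 = t₀ < t₁ < ⋯ < tₙ = 1 and a₁,…,aₙ ∈ [0,1] with at least one aᵢ > 0. Then the complex number f(z) := ∏ᵢ₌₁ⁿ ((1+(z−1)tᵢ)/(1+(z−1)tᵢ₋₁))^{aᵢ} has argument in (0, π); in particular Im f(z) > 0. -/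
open Complex

private lemma argExpAux {c : ℂ} (h : c.im ∈ Set.Ioo 0 Real.pi) :
    Complex.arg (Complex.exp c) = c.im := by
  have h1 : Complex.exp c
      = (Real.exp c.re : ℂ) * (Complex.cos c.im + Complex.sin c.im * I) := by
    rw [← Complex.exp_mul_I, Complex.ofReal_exp, ← Complex.exp_add]
    congr 1
    exact (Complex.re_add_im c).symm
  rw [h1, Complex.arg_real_mul _ (Real.exp_pos _),
    Complex.arg_cos_add_sin_mul_I ⟨by nlinarith [h.1, Real.pi_pos], h.2.le⟩]

private lemma argAddAux {u v : ℂ} (hu : u ≠ 0) (huim : 0 ≤ u.im) (hvim : 0 ≤ v.im)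
    (h : 0 < ((starRingEnd ℂ) u * v).im) :
    0 < (v / u).arg ∧ (v / u).arg < Real.pi ∧ v.arg = u.arg + (v / u).arg := by
  have hπ := Real.pi_pos
  have hv : v ≠ 0 := by rintro rfl; simp at h
  have e1 : ((starRingEnd ℂ) u * v).im = u.re * v.im - u.im * v.re := by
    simp [Complex.mul_im]; ring
  rw [e1] at h
  have hnsq : 0 < Complex.normSq u := Complex.normSq_pos.2 hu
  have hdiv_im : 0 < (v / u).im := by
    have e2 : (v / u).im = (u.re * v.im - u.im * v.re) / Complex.normSq u := by
      rw [Complex.div_im]; ring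
    rw [e2]; exact div_pos h hnsq
  have hd0 : 0 < (v / u).arg := by
    rcases (Complex.arg_nonneg_iff.2 hdiv_im.le).lt_or_eq with h' | h'
    · exact h'
    · exact absurd (Complex.arg_eq_zero_iff.1 h'.symm).2 (by linarith)
  have hdπ : (v / u).arg < Real.pi := by
    rcases (Complex.arg_le_pi (v / u)).lt_or_eq with h' | h'
    · exact h'
    · exact absurd (Complex.arg_eq_pi_iff.1 h').2 (by linarith)
  have huπ : u.arg < Real.pi := by
    rcases (Complex.arg_le_pi u).lt_or_eq with h' | h'
    · exact h'
    · obtain ⟨hre, him⟩ := Complex.arg_eq_pi_iff.1 h'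
      have h3 : u.im * v.re = 0 := by rw [him]; ring
      have h4 : 0 ≤ v.im * (-u.re) := mul_nonneg hvim (by linarith)
      nlinarith
  have hu0 : 0 ≤ u.arg := Complex.arg_nonneg_iff.2 huim
  have hv0 : 0 ≤ v.arg := Complex.arg_nonneg_iff.2 hvim
  have hvπ : v.arg ≤ Real.pi := Complex.arg_le_pi v
  have hd : v / u ≠ 0 := div_ne_zero hv hu
  have hang : (v.arg : Real.Angle) = ((u.arg + (v / u).arg : ℝ) : Real.Angle) := by
    have hveq : v = u * (v / u) := (mul_div_cancel₀ v hu).symm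
    rw [Real.Angle.coe_add]
    calc (v.arg : Real.Angle) = ((u * (v / u)).arg : Real.Angle) := by rw [← hveq]
    _ = (u.arg : Real.Angle) + ((v / u).arg : Real.Angle) :=
        Complex.arg_mul_coe_angle hu hd
  obtain ⟨k, hk⟩ := Real.Angle.angle_eq_iff_two_pi_dvd_sub.1 hang
  have hk0 : k = 0 := by
    have hb1 : (-1 : ℝ) < (k : ℝ) := by nlinarith
    have hb2 : (k : ℝ) < 1 := by nlinarith
    have : (-1 : ℤ) < k := by exact_mod_cast hb1
    have : k < 1 := by exact_mod_cast hb2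
    omega
  rw [hk0] at hk
  refine ⟨hd0, hdπ, by push_cast at hk; linarith⟩

theorem stmt12 (z : ℂ) (hz : 0 < z.im) (n : ℕ) (t a : ℕ → ℝ)
    (ht0 : t 0 = 0) (htn : t n = 1) (hmono : ∀ i < n, t i < t (i + 1))
    (ha : ∀ i < n, a i ∈ Set.Icc (0:ℝ) 1) (hpos : ∃ i < n, 0 < a i) :
    Complex.arg (∏ i ∈ Finset.range n,
        ((1 + (z - 1) * (t (i + 1) : ℂ)) / (1 + (z - 1) * (t i : ℂ))) ^ ((a i : ℂ)))
      ∈ Set.Ioo 0 Real.pi ∧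
    0 < (∏ i ∈ Finset.range n,
        ((1 + (z - 1) * (t (i + 1) : ℂ)) / (1 + (z - 1) * (t i : ℂ))) ^ ((a i : ℂ))).im := by
  have hπ := Real.pi_pos
  obtain ⟨i₀, hi₀n, hi₀⟩ := hpos
  set w : ℕ → ℂ := fun i => 1 + (z - 1) * (t i : ℂ) with hw
  have hmono' : ∀ i j, i ≤ j → j ≤ n → t i ≤ t j := by
    intro i j hij hjn
    induction j with
    | zero => have : i = 0 := by omega
              simp [this]
    | succ m ih =>
      rcases Nat.eq_or_lt_of_le hij with h | h
      · rw [h]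
      · exact le_trans (ih (by omega) (by omega)) (hmono m (by omega)).le
  have ht_nonneg : ∀ i ≤ n, 0 ≤ t i := fun i hi => ht0 ▸ hmono' 0 i (Nat.zero_le _) hi
  have him_eq : ∀ i, (w i).im = z.im * t i := by
    intro i
    simp [hw, Complex.add_im, Complex.mul_im, Complex.sub_im, Complex.sub_re,
      Complex.ofReal_re, Complex.ofReal_im]
  have hwim : ∀ i ≤ n, 0 ≤ (w i).im := by
    intro i hi
    rw [him_eq]
    exact mul_nonneg hz.le (ht_nonneg i hi)
  have hw_ne : ∀ i ≤ n, w i ≠ 0 := by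
    intro i hi hzero
    have h1 : z.im * t i = 0 := by rw [← him_eq i, hzero]; rfl
    have h2 : t i = 0 := by
      rcases mul_eq_zero.1 h1 with h | h
      · linarith
      · exact h
    rw [hw] at hzero
    simp only [h2] at hzero
    norm_num at hzero
  have hcross : ∀ i < n, 0 < ((starRingEnd ℂ) (w i) * w (i + 1)).im := by
    intro i hi
    have e : ((starRingEnd ℂ) (w i) * w (i + 1)).im = z.im * (t (i + 1) - t i) := by
      simp [hw, Complex.mul_im, Complex.mul_re, Complex.add_im, Complex.add_re,
        Complex.sub_im, Complex.sub_re, Complex.ofReal_re, Complex.ofReal_im]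
      ring
    rw [e]
    exact mul_pos hz (sub_pos.2 (hmono i hi))
  have hkey : ∀ i < n, 0 < (w (i + 1) / w i).arg ∧ (w (i + 1) / w i).arg < Real.pi ∧
      (w (i + 1)).arg = (w i).arg + (w (i + 1) / w i).arg := fun i hi =>
    argAddAux (hw_ne i hi.le) (hwim i hi.le) (hwim (i + 1) hi) (hcross i hi)
  have hwn : w n = z := by rw [hw]; simp [htn]
  have hw0 : w 0 = 1 := by rw [hw]; simp [ht0]
  have hsum : ∑ i ∈ Finset.range n, (w (i + 1) / w i).arg = z.arg := by
    calc ∑ i ∈ Finset.range n, (w (i + 1) / w i).arg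
        = ∑ i ∈ Finset.range n, ((w (i + 1)).arg - (w i).arg) :=
          Finset.sum_congr rfl (fun i hi => by
            have := (hkey i (Finset.mem_range.1 hi)).2.2; linarith)
      _ = (w n).arg - (w 0).arg := Finset.sum_range_sub (fun i => (w i).arg) n
      _ = z.arg := by rw [hwn, hw0, Complex.arg_one, sub_zero]
  have hargz_lt : z.arg < Real.pi := by
    rcases (Complex.arg_le_pi z).lt_or_eq with h' | h'
    · exact h'
    · obtain ⟨_, him⟩ := Complex.arg_eq_pi_iff.1 h'
      linarith
  set S : ℝ := ∑ i ∈ Finset.range n, a i * (w (i + 1) / w i).arg with hS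
  have hS_pos : 0 < S := by
    apply Finset.sum_pos' (fun i hi => mul_nonneg (ha i (Finset.mem_range.1 hi)).1
      (hkey i (Finset.mem_range.1 hi)).1.le)
    exact ⟨i₀, Finset.mem_range.2 hi₀n, mul_pos hi₀ (hkey i₀ hi₀n).1⟩
  have hS_lt : S < Real.pi := by
    have h1 : S ≤ ∑ i ∈ Finset.range n, (w (i + 1) / w i).arg := by
      apply Finset.sum_le_sum
      intro i hi
      exact mul_le_of_le_one_left (hkey i (Finset.mem_range.1 hi)).1.le
        (ha i (Finset.mem_range.1 hi)).2
    rw [hsum] at h1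
    linarith
  have hprod : (∏ i ∈ Finset.range n, (w (i + 1) / w i) ^ ((a i : ℂ)))
      = Complex.exp (∑ i ∈ Finset.range n, (a i : ℂ) * Complex.log (w (i + 1) / w i)) := by
    rw [Complex.exp_sum]
    refine Finset.prod_congr rfl (fun i hi => ?_)
    have hi' := Finset.mem_range.1 hi
    rw [Complex.cpow_def_of_ne_zero
      (div_ne_zero (hw_ne (i + 1) hi') (hw_ne i hi'.le)), mul_comm]
  have himS : (∑ i ∈ Finset.range n, (a i : ℂ) * Complex.log (w (i + 1) / w i)).im = S := by
    rw [Complex.im_sum]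
    exact Finset.sum_congr rfl (fun i hi => by
      simp [Complex.mul_im, Complex.ofReal_re, Complex.ofReal_im, Complex.log_im])
  have hmem : (∑ i ∈ Finset.range n, (a i : ℂ) * Complex.log (w (i + 1) / w i)).im
      ∈ Set.Ioo 0 Real.pi := by rw [himS]; exact ⟨hS_pos, hS_lt⟩
  constructor
  · rw [hprod, argExpAux hmem, himS]
    exact ⟨hS_pos, hS_lt⟩
  · rw [hprod, Complex.exp_im, himS]
    exact mul_pos (Real.exp_pos _) (Real.sin_pos_of_pos_of_lt_pi hS_pos hS_lt)
end
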